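/- With C = (c_1,…,c_k) an orthonormal basis of C = T U and Q the orthogonal projection onto span{c_i}, the approximation x_p^δ = Σ_i ⟨y^δ, c_i⟩ u_i (where T u_i = c_i) satisfies ‖x_p† − x_p^δ‖ ≤ ‖T‖ √(‖G_U‖_F Σ_l ‖u_l‖²) · δ whenever ‖y − y^δ‖ ≤ δ, where x_p† = Σ_i ⟨y, c_i⟩ u_i and G_U is the Gram matrix of the u_i. -/

import Mathlib

/-!
The error is `∑ i, ⟪e, T (u i)⟫ • u i` with `e = y - yδ`. Cauchy–Schwarz on `ι × ι` bounds the
squared norm of any combination `∑ i, a i • u i` by `(∑ i, a i ^ 2) ‖G_U‖_F`, and each coefficient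
satisfies `|⟪e, T (u i)⟫| ≤ ‖T‖ ‖e‖ ‖u i‖`.
-/

open scoped RealInnerProductSpace

section GramBound

variable {E : Type*} [NormedAddCommGroup E] [InnerProductSpace ℝ E] {ι : Type*} [Fintype ι]

theorem norm_sum_smul_sq_eq_sum_sum_inner (a : ι → ℝ) (v : ι → E) :
    ‖∑ i, a i • v i‖ ^ 2 = ∑ i, ∑ j, a i * a j * ⟪v i, v j⟫ := by
  rw [← real_inner_self_eq_norm_sq, sum_inner]
  refine Finset.sum_congr rfl fun i _ => ?_
  rw [inner_sum]
  refine Finset.sum_congr rfl fun j _ => ?_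
  rw [real_inner_smul_left, real_inner_smul_right]
  ring

theorem norm_sum_smul_sq_le_sum_sq_mul_gram_frobenius (a : ι → ℝ) (v : ι → E) :
    ‖∑ i, a i • v i‖ ^ 2 ≤ (∑ i, a i ^ 2) * √(∑ i, ∑ j, ⟪v i, v j⟫ ^ 2) := by
  have hsq : ∑ p : ι × ι, (a p.1 * a p.2) ^ 2 = (∑ i, a i ^ 2) ^ 2 := by
    simp only [Fintype.sum_prod_type, mul_pow, sq (∑ i, a i ^ 2), Finset.sum_mul_sum]
  calc ‖∑ i, a i • v i‖ ^ 2 = ∑ p : ι × ι, a p.1 * a p.2 * ⟪v p.1, v p.2⟫ := by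
        rw [norm_sum_smul_sq_eq_sum_sum_inner, Fintype.sum_prod_type]
    _ ≤ √(∑ p : ι × ι, (a p.1 * a p.2) ^ 2) * √(∑ p : ι × ι, ⟪v p.1, v p.2⟫ ^ 2) :=
        Real.sum_mul_le_sqrt_mul_sqrt _ _ _
    _ = (∑ i, a i ^ 2) * √(∑ i, ∑ j, ⟪v i, v j⟫ ^ 2) := by
        rw [hsq, Real.sqrt_sq (by positivity), Fintype.sum_prod_type]

end GramBound

theorem ContinuousLinearMap.inner_apply_sq_le {X Y : Type*}
    [NormedAddCommGroup X] [NormedSpace ℝ X] [NormedAddCommGroup Y] [InnerProductSpace ℝ Y]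
    (T : X →L[ℝ] Y) (e : Y) (x : X) : ⟪e, T x⟫ ^ 2 ≤ (‖T‖ * ‖e‖ * ‖x‖) ^ 2 := by
  rw [← sq_abs]
  gcongr
  calc |⟪e, T x⟫| ≤ ‖e‖ * ‖T x‖ := abs_real_inner_le_norm e (T x)
    _ ≤ ‖e‖ * (‖T‖ * ‖x‖) := by gcongr; exact T.le_opNorm x
    _ = ‖T‖ * ‖e‖ * ‖x‖ := by ring

theorem projected_part_error_bound_general
    {X Y : Type*} [NormedAddCommGroup X] [InnerProductSpace ℝ X]
    [NormedAddCommGroup Y] [InnerProductSpace ℝ Y]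
    (T : X →L[ℝ] Y) {k : ℕ} (u : Fin k → X)
    (y yδ : Y) (δ : ℝ) (hδ : ‖y - yδ‖ ≤ δ) :
    ‖(∑ i, ⟪y, T (u i)⟫ • u i) - (∑ i, ⟪yδ, T (u i)⟫ • u i)‖
      ≤ ‖T‖ * Real.sqrt ((Real.sqrt (∑ i, ∑ j, (⟪u i, u j⟫) ^ 2)) * ∑ l, ‖u l‖ ^ 2) * δ := by
  set G := √(∑ i, ∑ j, ⟪u i, u j⟫ ^ 2)
  have hdiff : (∑ i, ⟪y, T (u i)⟫ • u i) - (∑ i, ⟪yδ, T (u i)⟫ • u i)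
      = ∑ i, ⟪y - yδ, T (u i)⟫ • u i := by
    simp only [← Finset.sum_sub_distrib, inner_sub_left, sub_smul]
  have hcoeff : ∑ i, ⟪y - yδ, T (u i)⟫ ^ 2 ≤ ‖T‖ ^ 2 * δ ^ 2 * ∑ l, ‖u l‖ ^ 2 := by
    rw [Finset.mul_sum]
    gcongr with i
    calc ⟪y - yδ, T (u i)⟫ ^ 2 ≤ (‖T‖ * ‖y - yδ‖ * ‖u i‖) ^ 2 := T.inner_apply_sq_le _ _
      _ ≤ (‖T‖ * δ * ‖u i‖) ^ 2 := by gcongr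
      _ = ‖T‖ ^ 2 * δ ^ 2 * ‖u i‖ ^ 2 := by ring
  have hδ0 : 0 ≤ δ := (norm_nonneg _).trans hδ
  rw [hdiff, ← pow_le_pow_iff_left₀ (norm_nonneg _) (by positivity) two_ne_zero]
  calc ‖∑ i, ⟪y - yδ, T (u i)⟫ • u i‖ ^ 2 ≤ (∑ i, ⟪y - yδ, T (u i)⟫ ^ 2) * G :=
        norm_sum_smul_sq_le_sum_sq_mul_gram_frobenius _ u
    _ ≤ ‖T‖ ^ 2 * δ ^ 2 * (∑ l, ‖u l‖ ^ 2) * G := by gcongr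
    _ = (‖T‖ * √(G * ∑ l, ‖u l‖ ^ 2) * δ) ^ 2 := by
        rw [mul_pow, mul_pow, Real.sq_sqrt (by positivity)]
        ring

theorem projected_part_error_bound
    {X Y : Type*} [NormedAddCommGroup X] [InnerProductSpace ℝ X]
    [NormedAddCommGroup Y] [InnerProductSpace ℝ Y]
    (T : X →L[ℝ] Y) {k : ℕ} (u : Fin k → X)
    (hc : Orthonormal ℝ (fun i => T (u i)))
    (y yδ : Y) (δ : ℝ) (hδ : ‖y - yδ‖ ≤ δ) :
    ‖(∑ i, ⟪y, T (u i)⟫ • u i) - (∑ i, ⟪yδ, T (u i)⟫ • u i)‖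
      ≤ ‖T‖ * Real.sqrt ((Real.sqrt (∑ i, ∑ j, (⟪u i, u j⟫) ^ 2)) * ∑ l, ‖u l‖ ^ 2) * δ :=
  projected_part_error_bound_general T u y yδ δ hδ
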